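/- Let M be a compact smooth manifold. Then every unital ℂ-algebra homomorphism η : C^∞(M,ℂ) → ℂ is evaluation at a point: there exists a unique x ∈ M such that η(f) = f(x) for all f ∈ C^∞(M,ℂ). -/

import Mathlib

open Bundle Manifold
open scoped TensorProduct

local notation "∞" => (⊤ : ℕ∞)

noncomputable section

/-- Complex multiplication and addition are smooth over `ℝ`, so that the complex-valued smooth
functions on a real manifold form a (comm)ring. -/
instance : ContMDiffRing 𝓘(ℝ, ℂ) (⊤ : ℕ∞) ℂ where
  contMDiff_add := by
    rw [contMDiff_iff]
    refine ⟨continuous_add, fun x y => ?_⟩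
    simp only [mfld_simps]
    exact (contDiff_add).contDiffOn
  contMDiff_mul := by
    rw [contMDiff_iff]
    refine ⟨continuous_mul, fun x y => ?_⟩
    simp only [mfld_simps]
    exact (contDiff_mul).contDiffOn

variable {EM : Type*} [NormedAddCommGroup EM] [NormedSpace ℝ EM] [FiniteDimensional ℝ EM]
  {HM : Type*} [TopologicalSpace HM] {IM : ModelWithCorners ℝ EM HM}
  {M : Type*} [TopologicalSpace M] [ChartedSpace HM M] [IsManifold IM (⊤ : ℕ∞) M]
  [T2Space M] [SecondCountableTopology M] [CompactSpace M]

/-- The constant functions make the smooth complex-valued functions a `ℂ`-algebra. -/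
instance : Algebra ℂ C^∞⟮IM, M; 𝓘(ℝ, ℂ), ℂ⟯ :=
  RingHom.toAlgebra
    { toFun := fun c => ⟨fun _ => c, contMDiff_const⟩
      map_one' := rfl
      map_mul' := fun _ _ => rfl
      map_zero' := rfl
      map_add' := fun _ _ => rfl }

/-!
A proper ideal `J` of `C^∞(M, ℂ)` has a common zero: otherwise compactness gives finitely many
`gᵢ ∈ J` without common zero, and `∑ gᵢ * conj gᵢ = ∑ |gᵢ|²` is a nowhere vanishing element of
`J`, hence a unit. Applied to `ker η`, this gives a point `x` with `η f = f x` for all `f`, since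
`f - η f` lies in the kernel. The point is unique because smooth functions separate points.
-/

namespace ContMDiffMap

section Units

variable {𝕜 : Type*} [NontriviallyNormedField 𝕜] {E : Type*} [NormedAddCommGroup E]
  [NormedSpace 𝕜 E] {H : Type*} [TopologicalSpace H] {I : ModelWithCorners 𝕜 E H}
  {N : Type*} [TopologicalSpace N] [ChartedSpace H N] {n : WithTop ℕ∞}
  {𝕜' : Type*} [NormedField 𝕜'] [NormedAlgebra 𝕜 𝕜'] [ContMDiffRing 𝓘(𝕜, 𝕜') n 𝕜']

theorem isUnit_of_forall_ne_zero {f : C^n⟮I, N; 𝓘(𝕜, 𝕜'), 𝕜'⟯} (hf : ∀ y, f y ≠ 0) :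
    IsUnit f := by
  let g : C^n⟮I, N; 𝓘(𝕜, 𝕜'), 𝕜'⟯ :=
    ⟨fun y => (f y)⁻¹, fun y => (contDiffAt_inv 𝕜 (hf y)).comp_contMDiffAt (f.contMDiff y)⟩
  exact .of_mul_eq_one g (ext fun y => mul_inv_cancel₀ (hf y))

end Units

section Complex

variable {E : Type*} [NormedAddCommGroup E] [NormedSpace ℝ E] {H : Type*} [TopologicalSpace H]
  {I : ModelWithCorners ℝ E H} {N : Type*} [TopologicalSpace N] [ChartedSpace H N]

def conj {n : WithTop ℕ∞} (f : C^n⟮I, N; 𝓘(ℝ, ℂ), ℂ⟯) : C^n⟮I, N; 𝓘(ℝ, ℂ), ℂ⟯ :=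
  ⟨fun y => starRingEnd ℂ (f y), Complex.conjCLE.contDiff.comp_contMDiff f.contMDiff⟩

theorem sum_mul_conj_apply {ι : Type*} (t : Finset ι) (g : ι → C^∞⟮I, N; 𝓘(ℝ, ℂ), ℂ⟯) (y : N) :
    (∑ i ∈ t, g i * conj (g i)) y = ((∑ i ∈ t, Complex.normSq (g i y) : ℝ) : ℂ) := by
  change evalRingHom y (∑ i ∈ t, g i * conj (g i)) = _
  rw [map_sum]
  push_cast
  exact Finset.sum_congr rfl fun i _ => Complex.mul_conj (g i y)

theorem exists_forall_apply_eq_zero_of_ne_top [CompactSpace N]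
    {J : Ideal C^∞⟮I, N; 𝓘(ℝ, ℂ), ℂ⟯} (hJ : J ≠ ⊤) : ∃ x, ∀ f ∈ J, f x = 0 := by
  by_contra! hcover
  choose g hgJ hgx using hcover
  obtain ⟨t, ht⟩ := isCompact_univ.elim_finite_subcover (fun x => {y | g x y ≠ 0})
    (fun x => isOpen_ne.preimage (g x).contMDiff.continuous)
    (fun y _ => Set.mem_iUnion.2 ⟨y, hgx y⟩)
  have hsum_mem : ∑ x ∈ t, g x * conj (g x) ∈ J :=
    J.sum_mem fun x _ => J.mul_mem_right _ (hgJ x)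
  have hsum_ne : ∀ y, (∑ x ∈ t, g x * conj (g x)) y ≠ 0 := by
    intro y
    obtain ⟨x, hxt, hxy⟩ := Set.mem_iUnion₂.1 (ht (Set.mem_univ y))
    rw [sum_mul_conj_apply, Complex.ofReal_ne_zero]
    exact (Finset.sum_pos' (fun i _ => Complex.normSq_nonneg (g i y))
      ⟨x, hxt, Complex.normSq_pos.2 hxy⟩).ne'
  exact hJ (J.eq_top_of_isUnit_mem hsum_mem (isUnit_of_forall_ne_zero hsum_ne))

theorem exists_apply_ne_apply [FiniteDimensional ℝ E] [IsManifold I ∞ N] [T2Space N]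
    [SigmaCompactSpace N] {x y : N} (hxy : x ≠ y) :
    ∃ f : C^∞⟮I, N; 𝓘(ℝ, ℂ), ℂ⟯, f x ≠ f y := by
  obtain ⟨f, hfx, hfy, -⟩ := exists_contMDiffMap_zero_one_of_isClosed (n := ⊤) I
    isClosed_singleton isClosed_singleton (Set.disjoint_singleton.2 hxy)
  refine ⟨⟨fun z => (f z : ℂ), Complex.ofRealCLM.contDiff.comp_contMDiff f.contMDiff⟩, ?_⟩
  change ((f x : ℝ) : ℂ) ≠ (f y : ℝ)
  simp [hfx (Set.mem_singleton x), hfy (Set.mem_singleton y)]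

end Complex

end ContMDiffMap

/-- Every unital `ℂ`-algebra homomorphism from the smooth complex-valued functions on a compact
manifold to `ℂ` is evaluation at a unique point. -/
theorem algHom_eq_eval (η : C^∞⟮IM, M; 𝓘(ℝ, ℂ), ℂ⟯ →ₐ[ℂ] ℂ) :
    ∃! x : M, ∀ f : C^∞⟮IM, M; 𝓘(ℝ, ℂ), ℂ⟯, η f = f x := by
  obtain ⟨x, hx⟩ := ContMDiffMap.exists_forall_apply_eq_zero_of_ne_top (RingHom.ker_ne_top η)
  have hηx : ∀ f, η f = f x := fun f => by
    have hker : f - algebraMap ℂ _ (η f) ∈ RingHom.ker η := by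
      simp [RingHom.mem_ker]
    exact (sub_eq_zero.1 (hx _ hker)).symm
  refine ⟨x, hηx, fun y hηy => ?_⟩
  by_contra hyx
  obtain ⟨f, hf⟩ := ContMDiffMap.exists_apply_ne_apply (I := IM) hyx
  exact hf ((hηy f).symm.trans (hηx f))
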